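/- (RNNs with threshold activation simulate Moore machines, Appendix Theorem) Let (Q, Σ, Γ, δ, ρ, q₀) be a Moore machine with Q = {1,…,L}, Σ = {e₁,…,e_m}, Γ = {e₁,…,e_K} (unit basis vectors). Then there exists a recurrent neural network (U, W, V, b, σ, h₀) with n = L·(m+1) neurons, σ the Heaviside step function, such that when the network processes the interleaved input sequence x₁, 0, x₂, 0, …, 0, x_T (zeros inserted between symbols), the network state at even steps is the one-hot encoding of the Moore state, h_{2t} = e_{q_t}, and the network output satisfies y_{2t} = y_t = ρ(q_t), for all t ∈ {1,…,T}. -/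
import Mathlib


/-- The Heaviside step function: `σ(r) = 1` if `r > 0` and `0` otherwise. -/
noncomputable def heaviside (r : ℝ) : ℝ := if 0 < r then 1 else 0

/-- The one-hot (unit basis) vector `e_i`. -/
def onehot {α : Type*} [DecidableEq α] (i : α) : α → ℝ :=
  fun j => if j = i then 1 else 0

/-- The Moore-machine state sequence `q_t = δ(x_t, q_{t-1})`. -/
def mooreSeq {L m : ℕ} (δ : Fin m → Fin L → Fin L) (q₀ : Fin L)
    (x : ℕ → Fin m) : ℕ → Fin L
  | 0 => q₀
  | t + 1 => δ (x (t + 1)) (mooreSeq δ q₀ x t)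

/-- The interleaved input sequence `x₁, 0, x₂, 0, …`: at odd steps `2t-1` the
one-hot coding of `x_t` is fed in, at even steps the zero vector. -/
noncomputable def rnnInput {m : ℕ} (x : ℕ → Fin m) : ℕ → (Fin m → ℝ) :=
  fun s => if s % 2 = 1 then onehot (x ((s + 1) / 2)) else 0

/-- The recurrent-network state sequence
`h_t = σ(U·x_t + W·h_{t-1} + b)` with Heaviside activation `σ`. -/
noncomputable def rnnSeq {n m : ℕ} (U : Matrix (Fin n) (Fin m) ℝ)
    (W : Matrix (Fin n) (Fin n) ℝ) (b h₀ : Fin n → ℝ)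
    (u : ℕ → Fin m → ℝ) : ℕ → (Fin n → ℝ)
  | 0 => h₀
  | s + 1 => fun k =>
      heaviside ((U.mulVec (u (s + 1)) + W.mulVec (rnnSeq U W b h₀ u s) + b) k)

/-! ### Auxiliary definitions and lemmas for the construction -/

/-- Index of the state neuron for Moore state `i`. -/
def stIdx {L m : ℕ} (i : Fin L) : Fin (L * (m + 1)) :=
  ⟨(i : ℕ), lt_of_lt_of_le i.isLt (Nat.le_mul_of_pos_right L (Nat.succ_pos m))⟩

/-- Index of the pair neuron for (input `a`, previous state `i`). -/
def prIdx {L m : ℕ} (a : Fin m) (i : Fin L) : Fin (L * (m + 1)) :=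
  ⟨L + (a : ℕ) * L + (i : ℕ), by
    have ha : (a : ℕ) + 1 ≤ m := a.isLt
    have hi : (i : ℕ) < L := i.isLt
    have h1 : ((a : ℕ) + 1) * L ≤ m * L := Nat.mul_le_mul_right L ha
    calc L + (a : ℕ) * L + (i : ℕ) < L + ((a : ℕ) + 1) * L := by
          have : ((a : ℕ) + 1) * L = (a : ℕ) * L + L := by ring
          omega
      _ ≤ L + m * L := by omega
      _ = L * (m + 1) := by ring⟩

lemma stIdx_lt {L m : ℕ} (i : Fin L) : ((stIdx (m := m) i : Fin (L * (m + 1))) : ℕ) < L :=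
  i.isLt

lemma prIdx_not_lt {L m : ℕ} (a : Fin m) (i : Fin L) :
    ¬ ((prIdx a i : Fin (L * (m + 1))) : ℕ) < L := by
  intro h
  have hv : ((prIdx a i : Fin (L * (m + 1))) : ℕ) = L + (a : ℕ) * L + (i : ℕ) := rfl
  omega

@[simp] lemma stIdx_inj {L m : ℕ} {i j : Fin L} :
    (stIdx (m := m) i : Fin (L * (m + 1))) = stIdx j ↔ i = j := by
  constructor
  · intro h
    have hv := congrArg Fin.val h
    exact Fin.ext hv
  · rintro rfl; rfl

lemma prIdx_inj {L m : ℕ} {a a' : Fin m} {i i' : Fin L}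
    (h : (prIdx a i : Fin (L * (m + 1))) = prIdx a' i') : a = a' ∧ i = i' := by
  have hv : L + (a : ℕ) * L + (i : ℕ) = L + (a' : ℕ) * L + (i' : ℕ) :=
    congrArg Fin.val h
  have hL : 0 < L := lt_of_le_of_lt (Nat.zero_le _) i.isLt
  have h2 : L * (a : ℕ) + (i : ℕ) = L * (a' : ℕ) + (i' : ℕ) := by
    have e1 : (a : ℕ) * L = L * (a : ℕ) := Nat.mul_comm _ _
    have e2 : (a' : ℕ) * L = L * (a' : ℕ) := Nat.mul_comm _ _
    omega
  have hdiv : (a : ℕ) = (a' : ℕ) := by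
    have d1 : (L * (a : ℕ) + (i : ℕ)) / L = (a : ℕ) := by
      rw [Nat.mul_add_div hL, Nat.div_eq_of_lt i.isLt]; omega
    have d2 : (L * (a' : ℕ) + (i' : ℕ)) / L = (a' : ℕ) := by
      rw [Nat.mul_add_div hL, Nat.div_eq_of_lt i'.isLt]; omega
    
    rw [← d1, ← d2, h2]
  have hmod : (i : ℕ) = (i' : ℕ) := by
    have e2 : L * (a : ℕ) = L * (a' : ℕ) := by rw [hdiv]
    omega
  exact ⟨Fin.ext hdiv, Fin.ext hmod⟩

lemma stIdx_ne_prIdx {L m : ℕ} (i : Fin L) (a : Fin m) (i' : Fin L) :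
    (stIdx (m := m) i : Fin (L * (m + 1))) ≠ prIdx a i' := by
  intro h
  have hv : (i : ℕ) = L + (a : ℕ) * L + (i' : ℕ) := congrArg Fin.val h
  have := i.isLt
  omega

lemma idx_cases {L m : ℕ} (hL : 0 < L) (k : Fin (L * (m + 1))) :
    (∃ i, k = stIdx i) ∨ (∃ a i, k = prIdx a i) := by
  by_cases h : (k : ℕ) < L
  · exact Or.inl ⟨⟨(k : ℕ), h⟩, Fin.ext rfl⟩
  · push_neg at h
    right
    have hk : (k : ℕ) < L * m + L := by
      have := k.isLt
      have e : L * (m + 1) = L * m + L := by ring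
      omega
    have hlt : (k : ℕ) - L < L * m := by omega
    have hdm : ((k : ℕ) - L) / L < m := by
      rw [Nat.div_lt_iff_lt_mul hL]
      have e : L * m = m * L := Nat.mul_comm _ _
      omega
    refine ⟨⟨((k : ℕ) - L) / L, hdm⟩, ⟨((k : ℕ) - L) % L, Nat.mod_lt _ hL⟩, ?_⟩
    apply Fin.ext
    show (k : ℕ) = L + ((k : ℕ) - L) / L * L + ((k : ℕ) - L) % L
    have hdm2 := Nat.div_add_mod ((k : ℕ) - L) L
    have e1 : L * (((k : ℕ) - L) / L) = ((k : ℕ) - L) / L * L := Nat.mul_comm _ _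
    omega

lemma mulVec_single {n p : ℕ} (M : Matrix (Fin n) (Fin p) ℝ) (j₀ : Fin p) :
    M.mulVec (fun j => if j = j₀ then (1 : ℝ) else 0) = fun k => M k j₀ := by
  funext k
  simp [Matrix.mulVec, dotProduct, mul_ite, mul_one, mul_zero]

lemma heaviside_pos {r : ℝ} (h : 0 < r) : heaviside r = 1 := if_pos h

lemma heaviside_nonpos {r : ℝ} (h : r ≤ 0) : heaviside r = 0 := if_neg (not_lt.mpr h)

/-- Appendix Theorem: any Moore machine with states `{1,…,L}`, one-hot inputs
`e₁,…,e_m` and one-hot outputs `e₁,…,e_K` can be simulated by a recurrent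
neural network with `n = L·(m+1)` Heaviside neurons on the interleaved input
sequence `x₁, 0, x₂, 0, …`: the even-step states one-hot encode the Moore
state, `h_{2t} = e_{q_t}`, and the even-step outputs satisfy
`y_{2t} = e_{ρ(q_t)}`, for all `t ≥ 1`. -/
theorem rnn_simulates_moore (L m K : ℕ) (hL : 0 < L)
    (δ : Fin m → Fin L → Fin L) (ρ : Fin L → Fin K) (q₀ : Fin L) :
    ∃ (U : Matrix (Fin (L * (m + 1))) (Fin m) ℝ)
      (W : Matrix (Fin (L * (m + 1))) (Fin (L * (m + 1))) ℝ)
      (V : Matrix (Fin K) (Fin (L * (m + 1))) ℝ)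
      (b h₀ : Fin (L * (m + 1)) → ℝ),
      ∀ (x : ℕ → Fin m) (t : ℕ), 1 ≤ t →
        (rnnSeq U W b h₀ (rnnInput x) (2 * t)
          = fun k : Fin (L * (m + 1)) => if (k : ℕ) = (mooreSeq δ q₀ x t : ℕ) then (1 : ℝ) else 0) ∧
        V.mulVec (rnnSeq U W b h₀ (rnnInput x) (2 * t))
          = onehot (ρ (mooreSeq δ q₀ x t)) := by
  classical
  set U : Matrix (Fin (L * (m + 1))) (Fin m) ℝ :=
    fun k a => if ∃ i, k = prIdx a i then 1 else 0 with hU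
  set W : Matrix (Fin (L * (m + 1))) (Fin (L * (m + 1))) ℝ :=
    fun k j => if (∃ a i, k = stIdx (δ a i) ∧ j = prIdx a i) ∨
                 (∃ a i, k = prIdx a i ∧ j = stIdx i) then 1 else 0 with hW
  set V : Matrix (Fin K) (Fin (L * (m + 1))) ℝ :=
    fun c k => if ∃ i, k = stIdx i ∧ ρ i = c then 1 else 0 with hV
  set b : Fin (L * (m + 1)) → ℝ :=
    fun k => if (k : ℕ) < L then -(1/2) else -(3/2) with hb
  set h₀ : Fin (L * (m + 1)) → ℝ :=
    fun k => if k = stIdx q₀ then 1 else 0 with hh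
  refine ⟨U, W, V, b, h₀, ?_⟩
  intro x t _
  have key : ∀ s : ℕ, rnnSeq U W b h₀ (rnnInput x) (2 * s)
      = fun k => if k = stIdx (mooreSeq δ q₀ x s) then (1 : ℝ) else 0 := by
    intro s
    induction s with
    | zero => rfl
    | succ s ih =>
      set q := mooreSeq δ q₀ x s with hq
      set a := x (s + 1) with ha
      -- odd step: pair neuron (a, q) fires
      have h1 : rnnSeq U W b h₀ (rnnInput x) (2 * s + 1)
          = fun k => if k = prIdx a q then (1 : ℝ) else 0 := by
        have e : rnnSeq U W b h₀ (rnnInput x) (2 * s + 1)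
            = fun k => heaviside ((U.mulVec (rnnInput x (2 * s + 1))
                + W.mulVec (rnnSeq U W b h₀ (rnnInput x) (2 * s)) + b) k) := rfl
        rw [e, ih]
        have hin : rnnInput x (2 * s + 1) = fun j => if j = a then (1 : ℝ) else 0 := by
          unfold rnnInput onehot
          have h2 : (2 * s + 1) % 2 = 1 := by omega
          have h3 : (2 * s + 1 + 1) / 2 = s + 1 := by omega
          rw [if_pos h2, h3]
        rw [hin, mulVec_single, mulVec_single]
        have hW1 : ∀ k, W k (stIdx q) = if ∃ a', k = prIdx a' q then (1 : ℝ) else 0 := by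
          intro k
          rw [hW]
          refine if_congr ?_ rfl rfl
          constructor
          · rintro (⟨a', i', _, h⟩ | ⟨a', i', hk, h⟩)
            · exact absurd h (stIdx_ne_prIdx _ _ _)
            · obtain rfl : q = i' := stIdx_inj.mp h
              exact ⟨a', hk⟩
          · rintro ⟨a', hk⟩
            exact Or.inr ⟨a', q, hk, rfl⟩
        funext k
        simp only [Pi.add_apply, hW1, hU, hb]
        by_cases hk : k = prIdx a q
        · subst hk
          have c1 : ∃ i, (prIdx a q : Fin (L * (m + 1))) = prIdx a i := ⟨q, rfl⟩
          have c2 : ∃ a', (prIdx a q : Fin (L * (m + 1))) = prIdx a' q := ⟨a, rfl⟩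
          rw [if_pos rfl, if_pos c1, if_pos c2, if_neg (prIdx_not_lt a q)]
          exact heaviside_pos (by norm_num)
        · rw [if_neg hk]
          apply heaviside_nonpos
          rcases idx_cases hL k with ⟨i, rfl⟩ | ⟨a', i', rfl⟩
          · have n1 : ¬ ∃ i'', (stIdx i : Fin (L * (m + 1))) = prIdx a i'' := by
              rintro ⟨i'', h⟩; exact stIdx_ne_prIdx _ _ _ h
            have n2 : ¬ ∃ a'', (stIdx i : Fin (L * (m + 1))) = prIdx a'' q := by
              rintro ⟨a'', h⟩; exact stIdx_ne_prIdx _ _ _ h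
            rw [if_neg n1, if_neg n2, if_pos (stIdx_lt i)]
            norm_num
          · rw [if_neg (prIdx_not_lt a' i')]
            by_cases h1 : ∃ i'', (prIdx a' i' : Fin (L * (m + 1))) = prIdx a i''
            · obtain ⟨i'', h⟩ := h1
              obtain ⟨ha1, hi1⟩ := prIdx_inj h
              have n2 : ¬ ∃ a'', (prIdx a' i' : Fin (L * (m + 1))) = prIdx a'' q := by
                rintro ⟨a'', h'⟩
                obtain ⟨ha2, hi2⟩ := prIdx_inj h'
                exact hk (by rw [ha1, hi2])
              rw [if_pos ⟨i'', h⟩, if_neg n2]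
              norm_num
            · rw [if_neg h1]
              have hle : (if ∃ a'', (prIdx a' i' : Fin (L * (m + 1))) = prIdx a'' q
                  then (1 : ℝ) else 0) ≤ 1 := by split <;> norm_num
              linarith
      -- even step: state neuron δ a q fires
      have e2 : 2 * (s + 1) = (2 * s + 1) + 1 := by ring
      rw [e2]
      have e : rnnSeq U W b h₀ (rnnInput x) ((2 * s + 1) + 1)
          = fun k => heaviside ((U.mulVec (rnnInput x (2 * s + 1 + 1))
              + W.mulVec (rnnSeq U W b h₀ (rnnInput x) (2 * s + 1)) + b) k) := rfl
      rw [e, h1]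
      have hin : rnnInput x (2 * s + 1 + 1) = 0 := by
        unfold rnnInput
        rw [if_neg (by omega)]
      rw [hin, Matrix.mulVec_zero, mulVec_single]
      have hW2 : ∀ k, W k (prIdx a q) = if k = stIdx (δ a q) then (1 : ℝ) else 0 := by
        intro k
        rw [hW]
        refine if_congr ?_ rfl rfl
        constructor
        · rintro (⟨a', i', hk, h⟩ | ⟨a', i', _, h⟩)
          · obtain ⟨rfl, rfl⟩ := prIdx_inj h.symm
            exact hk
          · exact absurd h.symm (stIdx_ne_prIdx _ _ _)
        · rintro rfl
          exact Or.inl ⟨a, q, rfl, rfl⟩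
      have hms : mooreSeq δ q₀ x (s + 1) = δ a q := rfl
      rw [hms]
      funext k
      simp only [Pi.add_apply, Pi.zero_apply, hW2, hb, zero_add]
      by_cases hk : k = stIdx (δ a q)
      · subst hk
        rw [if_pos rfl, if_pos (stIdx_lt (δ a q))]
        exact heaviside_pos (by norm_num)
      · rw [if_neg hk]
        apply heaviside_nonpos
        rw [zero_add]
        split <;> norm_num
  constructor
  · rw [key t]
    funext k
    refine if_congr ?_ rfl rfl
    constructor
    · rintro rfl; rfl
    · intro h
      exact Fin.ext h
  · rw [key t, mulVec_single, hV]
    funext c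
    show (if ∃ i, (stIdx (mooreSeq δ q₀ x t) : Fin (L * (m + 1))) = stIdx i ∧ ρ i = c
        then (1 : ℝ) else 0) = onehot (ρ (mooreSeq δ q₀ x t)) c
    unfold onehot
    refine if_congr ?_ rfl rfl
    constructor
    · rintro ⟨i, hi, rfl⟩
      rw [stIdx_inj.mp hi]
    · rintro rfl
      exact ⟨_, rfl, rfl⟩
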